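/- The Bell-number-like sequence b_n with EGF exp((1/2)exp(2x) + exp(x) - 3/2) (the k=1 case, i.e., the partition category / OEIS A002872) satisfies b_n = sum_{m=0}^{n} (sum_{i=m}^{n} S(n,i) C(i,m)) * cd'(m), where cd'(m) = sum_i m!/(i!(m-2i)! 2^i) is the involution number cd(m). -/

import Mathlib

/-- Stirling numbers of the second kind. -/
def stirling2 : ℕ → ℕ → ℕ
  | 0, 0 => 1
  | 0, _ + 1 => 0
  | _ + 1, 0 => 0
  | n + 1, k + 1 => (k + 1) * stirling2 n (k + 1) + stirling2 n k

/-- `cd m` is the number of involutions in the symmetric group on `m` letters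
(OEIS A000085); it equals `∑_i m!/(i!(m-2i)!2^i)`. -/
noncomputable def cd (m : ℕ) : ℕ :=
  Nat.card {g : Equiv.Perm (Fin m) // g ^ 2 = 1}

/-- The formal exponential `exp ∘ g` of a formal power series `g` (with zero constant
coefficient), defined coefficientwise. -/
noncomputable def expComp (g : PowerSeries ℚ) : PowerSeries ℚ :=
  PowerSeries.mk fun n =>
    ∑ k ∈ Finset.range (n + 1), ((k.factorial : ℚ))⁻¹ * PowerSeries.coeff (R := ℚ) n (g ^ k)

/-!
Put `a k = ∑ m, C(k, m) · cd m`; swapping the order of summation, the `n`-th coefficient on the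
left is `∑ k, S(n, k) · a k / n!`. Since `∑ n, S(n, k) xⁿ / n! = (eˣ - 1)ᵏ / k!`, the left side is
the exponential generating function `A` of `a` evaluated at `eˣ - 1`.

Deleting the letter `0` from an involution of `{0, …, m + 1}` either leaves an involution of
`m + 1` letters (if `0` is fixed) or, after also deleting its partner, one of `m` letters; so
`cd (m + 2) = cd (m + 1) + (m + 1) · cd m`, i.e. the generating function `I` of `cd` solves
`I' = (1 + x) I`, whence `I = exp (x + x² / 2)`. Multiplying by `eˣ` performs the binomial
transform, so `A = exp (2x + x² / 2)`, and `2(eˣ - 1) + (eˣ - 1)² / 2 = e²ˣ / 2 + eˣ - 3 / 2`.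
Identities between exponentials are proved by uniqueness of solutions of `F' = u F`.
-/

open Equiv Equiv.Perm

theorem MulEquiv.card_sq_eq_one_congr {G H : Type*} [Monoid G] [Monoid H] (e : G ≃* H) :
    Nat.card {g : G // g ^ 2 = 1} = Nat.card {h : H // h ^ 2 = 1} :=
  Nat.card_congr <| e.toEquiv.subtypeEquiv fun g => by
    rw [show e.toEquiv g = e g from rfl, ← map_pow, MulEquiv.map_eq_one_iff]

namespace Equiv.Perm

theorem card_sq_eq_one_congr {α β : Type*} (e : α ≃ β) :
    Nat.card {p : Perm α // p ^ 2 = 1} = Nat.card {q : Perm β // q ^ 2 = 1} :=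
  e.permCongrHom.card_sq_eq_one_congr

theorem card_sq_eq_one_of_subsingleton (α : Type*) [Subsingleton α] :
    Nat.card {p : Perm α // p ^ 2 = 1} = 1 :=
  Nat.card_eq_one_iff_unique.mpr ⟨inferInstance, ⟨⟨1, one_pow 2⟩⟩⟩

variable {α : Type*}

theorem sq_optionCongr_eq_one_iff (p : Perm α) : optionCongr p ^ 2 = 1 ↔ p ^ 2 = 1 := by
  rw [sq, sq, mul_def, ← optionCongr_trans, ← mul_def, ← optionCongr_one]
  exact optionCongr_injective.eq_iff

variable [DecidableEq α]

theorem sq_decomposeOption_symm_none_eq_one_iff (p : Perm α) :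
    (decomposeOption.symm (none, p)) ^ 2 = 1 ↔ p ^ 2 = 1 := by
  rw [decomposeOption_symm_apply, swap_self, ← one_def, one_mul, sq_optionCongr_eq_one_iff]

theorem sq_decomposeOption_symm_some_eq_one_iff (a : α) (p : Perm α) :
    (decomposeOption.symm (some a, p)) ^ 2 = 1 ↔ p a = a ∧ p ^ 2 = 1 := by
  rw [decomposeOption_symm_apply]
  by_cases hpa : p a = a
  · have hcomm : Commute (swap none (some a)) (optionCongr p) := by
      rw [Commute, SemiconjBy, mul_swap_eq_swap_mul]
      simp [hpa]
    rw [hcomm.mul_pow, sq (swap _ _), swap_mul_self, one_mul, sq_optionCongr_eq_one_iff]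
    exact (and_iff_right hpa).symm
  · simp only [hpa, false_and, iff_false]
    intro h
    have h_none := congrArg (· none) h
    simp [sq, swap_apply_of_ne_of_ne, hpa] at h_none

theorem card_fixing_and_sq_eq_one (a : α) :
    Nat.card {p : Perm α // p a = a ∧ p ^ 2 = 1} =
      Nat.card {q : Perm {x // x ≠ a} // q ^ 2 = 1} := by
  symm
  refine Nat.card_congr <|
    ((Perm.subtypeEquivSubtypePerm fun x : α => x ≠ a).subtypeEquiv
        (q := fun f => f.1 ^ 2 = 1) fun q => ?_).trans <|
    (subtypeSubtypeEquivSubtypeInter _ fun f : Perm α => f ^ 2 = 1).trans <|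
    subtypeEquivRight fun f => ?_
  · rw [subtypeEquivSubtypePerm_apply_coe, ← map_pow]
    exact (ofSubtype_injective.eq_iff' (map_one _)).symm
  · simp

theorem card_sq_eq_one_option [Fintype α] :
    Nat.card {σ : Perm (Option α) // σ ^ 2 = 1} =
      Nat.card {p : Perm α // p ^ 2 = 1} +
        ∑ a : α, Nat.card {q : Perm {x // x ≠ a} // q ^ 2 = 1} := by
  rw [← Nat.card_congr ((decomposeOption.subtypeEquiv
      (q := fun x => (decomposeOption.symm x) ^ 2 = 1) fun σ => by rw [symm_apply_apply]).symm),
    Nat.card_congr (subtypeProdEquivSigmaSubtype fun o p => (decomposeOption.symm (o, p)) ^ 2 = 1),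
    Nat.card_sigma, Fintype.sum_option]
  congr 1
  · exact Nat.card_congr (subtypeEquivRight sq_decomposeOption_symm_none_eq_one_iff)
  · refine Fintype.sum_congr _ _ fun a => ?_
    rw [Nat.card_congr (subtypeEquivRight (sq_decomposeOption_symm_some_eq_one_iff a)),
      card_fixing_and_sq_eq_one]

end Equiv.Perm

theorem cd_zero : cd 0 = 1 := card_sq_eq_one_of_subsingleton _

theorem cd_one : cd 1 = 1 := card_sq_eq_one_of_subsingleton _

theorem cd_add_two (n : ℕ) : cd (n + 2) = cd (n + 1) + (n + 1) * cd n := by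
  have hcomplement (a : Fin (n + 1)) :
      Nat.card {q : Perm {x // x ≠ a} // q ^ 2 = 1} = cd n :=
    (card_sq_eq_one_congr (finSuccAboveEquiv a)).symm
  rw [cd, card_sq_eq_one_congr (finSuccEquiv (n + 1)), card_sq_eq_one_option, ← cd,
    Fintype.sum_congr _ _ hcomplement, Finset.sum_const, Finset.card_univ, Fintype.card_fin,
    smul_eq_mul]

open PowerSeries Finset Nat

namespace PowerSeries

variable {R : Type*} [CommRing R]

theorem eq_of_derivative_eq_mul [IsAddTorsionFree R] {u f g : R⟦X⟧}
    (hf : d⁄dX R f = u * f) (hg : d⁄dX R g = u * g) (h0 : constantCoeff f = constantCoeff g) :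
    f = g := by
  ext n
  induction n using Nat.strong_induction_on with
  | _ n ih =>
    cases n with
    | zero => simpa using h0
    | succ m =>
      have hm : coeff m (d⁄dX R f) = coeff m (d⁄dX R g) := by
        rw [hf, hg, coeff_mul, coeff_mul]
        refine sum_congr rfl fun p hp => ?_
        rw [ih p.2 (by have := mem_antidiagonal.mp hp; omega)]
      rw [coeff_derivative, coeff_derivative, ← Nat.cast_succ, mul_comm, ← nsmul_eq_mul,
        mul_comm, ← nsmul_eq_mul] at hm
      exact (smul_right_inj m.succ_ne_zero).mp hm

theorem coeff_pow_eq_zero_of_lt {h : R⟦X⟧} (hh : constantCoeff h = 0) {k n : ℕ} (hnk : n < k) :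
    coeff n (h ^ k) = 0 :=
  X_pow_dvd_iff.mp (pow_dvd_pow_of_dvd (X_dvd_iff.mpr hh) k) n hnk

theorem coeff_subst_eq_sum_range {h : R⟦X⟧} (hh : constantCoeff h = 0) (f : R⟦X⟧) (n : ℕ) :
    coeff n (f.subst h) = ∑ k ∈ range (n + 1), coeff k f * coeff n (h ^ k) := by
  rw [coeff_subst' (HasSubst.of_constantCoeff_zero' hh)]
  refine finsum_eq_sum_of_support_subset _ fun k hk => ?_
  by_contra hkn
  exact hk (by simp [coeff_pow_eq_zero_of_lt hh (show n < k by simpa using hkn)])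

variable [Algebra ℚ R]

theorem derivative_exp_subst {a : R⟦X⟧} (ha : HasSubst a) :
    d⁄dX R ((exp R).subst a) = d⁄dX R a * (exp R).subst a := by
  rw [derivative_subst ha, derivative_exp, mul_comm]

theorem constantCoeff_exp_subst {a : R⟦X⟧} (ha : constantCoeff a = 0) :
    constantCoeff ((exp R).subst a) = 1 := by
  rw [← coeff_zero_eq_constantCoeff_apply, coeff_subst_eq_sum_range ha]
  simp

theorem exp_subst_add [IsAddTorsionFree R] {a b : R⟦X⟧} (ha : constantCoeff a = 0)
    (hb : constantCoeff b = 0) :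
    (exp R).subst (a + b) = (exp R).subst a * (exp R).subst b := by
  have hab : constantCoeff (a + b) = 0 := by rw [map_add, ha, hb, add_zero]
  refine eq_of_derivative_eq_mul (u := d⁄dX R (a + b))
    (derivative_exp_subst (HasSubst.of_constantCoeff_zero' hab)) ?_ ?_
  · rw [Derivation.leibniz, derivative_exp_subst (HasSubst.of_constantCoeff_zero' ha),
      derivative_exp_subst (HasSubst.of_constantCoeff_zero' hb), map_add, smul_eq_mul, smul_eq_mul]
    ring
  · rw [map_mul, constantCoeff_exp_subst ha, constantCoeff_exp_subst hb,
      constantCoeff_exp_subst hab, mul_one]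

theorem factorial_mul_coeff_exp_sub_one_pow (n k : ℕ) :
    (n ! : R) * coeff n ((exp R - 1) ^ k) = k ! * Nat.stirlingSecond n k := by
  have h0 : constantCoeff (exp R - 1) = 0 := by simp
  induction n generalizing k with
  | zero =>
    cases k with
    | zero => simp
    | succ k => simp [coeff_pow_eq_zero_of_lt h0 k.succ_pos]
  | succ n ih =>
    cases k with
    | zero => simp [coeff_one]
    | succ k =>
      have hderiv : d⁄dX R ((exp R - 1) ^ (k + 1)) =
          C ((k : R) + 1) * ((exp R - 1) ^ (k + 1) + (exp R - 1) ^ k) := by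
        rw [derivative_pow, map_sub, derivative_exp, Derivation.map_one_eq_zero, map_add, map_one,
          map_natCast]
        push_cast
        ring
      calc ((n + 1)! : R) * coeff (n + 1) ((exp R - 1) ^ (k + 1))
          = n ! * coeff n (d⁄dX R ((exp R - 1) ^ (k + 1))) := by
            rw [coeff_derivative, factorial_succ]; push_cast; ring
        _ = (k + 1) *
              (n ! * coeff n ((exp R - 1) ^ (k + 1)) + n ! * coeff n ((exp R - 1) ^ k)) := by
            rw [hderiv, coeff_C_mul, map_add]; ring
        _ = (k + 1)! * Nat.stirlingSecond (n + 1) (k + 1) := by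
            rw [ih, ih, stirlingSecond_succ_succ, factorial_succ]; push_cast; ring

end PowerSeries

theorem stirling2_eq_stirlingSecond : stirling2 = Nat.stirlingSecond := by
  funext n k
  induction n generalizing k with
  | zero => cases k <;> rfl
  | succ n ih => cases k <;> simp [stirling2, stirlingSecond_succ_succ, ih]

noncomputable def involutionEGF : ℚ⟦X⟧ := mk fun m => (cd m : ℚ) / m !

theorem derivative_involutionEGF : d⁄dX ℚ involutionEGF = (1 + X) * involutionEGF := by
  ext m
  rw [coeff_derivative, add_mul, one_mul, map_add]
  cases m with
  | zero => simp [involutionEGF, cd_zero, cd_one]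
  | succ m =>
    simp only [coeff_succ_X_mul, involutionEGF, coeff_mk]
    rw [cd_add_two, factorial_succ (m + 1), factorial_succ m]
    push_cast
    field_simp

theorem involutionEGF_eq : involutionEGF = (exp ℚ).subst (X + (2⁻¹ : ℚ) • X ^ 2 : ℚ⟦X⟧) := by
  have hq : constantCoeff (X + (2⁻¹ : ℚ) • X ^ 2 : ℚ⟦X⟧) = 0 := by simp
  refine eq_of_derivative_eq_mul derivative_involutionEGF ?_ ?_
  · rw [derivative_exp_subst (HasSubst.of_constantCoeff_zero' hq)]
    rw [map_add, Derivation.map_smul, derivative_X, derivative_pow, derivative_X, mul_one,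
      Nat.cast_ofNat, show 2 - 1 = 1 from rfl, pow_one, two_mul, ← two_smul ℚ, smul_smul,
      inv_mul_cancel₀ two_ne_zero, one_smul]
  · rw [constantCoeff_exp_subst hq, ← coeff_zero_eq_constantCoeff_apply]
    simp [involutionEGF, cd_zero]

theorem exp_mul_involutionEGF :
    exp ℚ * involutionEGF = (exp ℚ).subst (X + (X + (2⁻¹ : ℚ) • X ^ 2) : ℚ⟦X⟧) := by
  rw [exp_subst_add constantCoeff_X (by simp), X_subst, involutionEGF_eq]

theorem coeff_exp_mul_involutionEGF (k : ℕ) :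
    coeff k (exp ℚ * involutionEGF) = (∑ m ∈ range (k + 1), k.choose m * cd m : ℕ) / k ! := by
  rw [coeff_mul, ← Nat.sum_antidiagonal_swap]
  simp only [Prod.fst_swap, Prod.snd_swap]
  rw [Nat.sum_antidiagonal_eq_sum_range_succ fun m i => coeff i (exp ℚ) * coeff m involutionEGF]
  push_cast
  rw [sum_div]
  refine sum_congr rfl fun m hm => ?_
  rw [cast_choose ℚ (mem_range_succ_iff.mp hm)]
  simp only [coeff_exp, Algebra.algebraMap_self, one_div, map_inv₀, map_natCast, involutionEGF,
    coeff_mk]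
  field_simp

theorem expComp_eq_exp_subst {g : ℚ⟦X⟧} (hg : constantCoeff g = 0) :
    expComp g = (exp ℚ).subst g := by
  ext n
  rw [coeff_subst_eq_sum_range hg, expComp, coeff_mk]
  simp

theorem expComp_X : expComp X = exp ℚ := by
  rw [expComp_eq_exp_subst constantCoeff_X, X_subst]

theorem expComp_C_two_mul_X : expComp (C 2 * X) = exp ℚ ^ 2 := by
  rw [expComp_eq_exp_subst (by simp), map_ofNat, two_mul,
    exp_subst_add constantCoeff_X constantCoeff_X, X_subst, sq]

theorem coeff_exp_sub_one_pow (n k : ℕ) :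
    coeff n ((exp ℚ - 1) ^ k) = (k ! : ℚ) * stirling2 n k / n ! := by
  rw [eq_div_iff (by positivity), mul_comm, factorial_mul_coeff_exp_sub_one_pow,
    stirling2_eq_stirlingSecond]

theorem mk_sum_stirling2_choose_cd_eq_subst :
    mk (fun n => (∑ m ∈ range (n + 1),
        ((∑ i ∈ Icc m n, stirling2 n i * choose i m : ℕ) : ℚ) * (cd m : ℚ)) / (n ! : ℚ)) =
      (exp ℚ * involutionEGF).subst (exp ℚ - 1) := by
  ext n
  rw [coeff_mk, coeff_subst_eq_sum_range (by simp)]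
  simp only [coeff_exp_mul_involutionEGF, coeff_exp_sub_one_pow]
  have hswap : ∑ m ∈ range (n + 1), ∑ i ∈ Icc m n, (stirling2 n i * choose i m * cd m : ℚ) =
      ∑ i ∈ range (n + 1), ∑ m ∈ range (i + 1), (stirling2 n i * choose i m * cd m : ℚ) := by
    simpa [range_eq_Ico, Ico_add_one_right_eq_Icc] using sum_Ico_Ico_comm 0 (n + 1)
      fun m i => (stirling2 n i * choose i m * cd m : ℚ)
  push_cast
  have hterm (k : ℕ) (a : ℚ) :
      a / k ! * (k ! * stirling2 n k / n !) = stirling2 n k * a / n ! := by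
    field_simp
  simp only [hterm, ← sum_div, sum_mul, mul_sum, ← mul_assoc, hswap]

/-- For the partition category (the `k = 1` case, OEIS A002872):
`∑_n (∑_{m=0}^{n} (∑_{i=m}^{n} S(n,i)C(i,m)) · cd(m)) xⁿ/n!
  = exp((1/2)·exp(2x) + exp(x) - 3/2)`. -/
theorem partition_category_egf :
    PowerSeries.mk (fun n =>
        (∑ m ∈ Finset.range (n + 1),
          ((∑ i ∈ Finset.Icc m n, stirling2 n i * Nat.choose i m : ℕ) : ℚ) * (cd m : ℚ)) /
          (n.factorial : ℚ)) =
      expComp (PowerSeries.C (R := ℚ) (1 / 2) * expComp (PowerSeries.C (R := ℚ) 2 * PowerSeries.X) +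
        expComp PowerSeries.X - PowerSeries.C (R := ℚ) (3 / 2)) := by
  have hh : constantCoeff (exp ℚ - 1) = 0 := by simp
  have hq : constantCoeff (X + (X + (2⁻¹ : ℚ) • X ^ 2) : ℚ⟦X⟧) = 0 := by simp
  have hexponent : C (1 / 2) * expComp (C 2 * X) + expComp X - C (3 / 2) =
      (X + (X + (2⁻¹ : ℚ) • X ^ 2) : ℚ⟦X⟧).subst (exp ℚ - 1) := by
    have hsubst := HasSubst.of_constantCoeff_zero' hh
    rw [expComp_C_two_mul_X, expComp_X, subst_add hsubst, subst_add hsubst, subst_smul hsubst,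
      subst_pow hsubst, subst_X hsubst, smul_eq_C_mul]
    have h1 : (2 : ℚ⟦X⟧) * C (1 / 2) = 1 := by rw [← map_ofNat C, ← map_mul]; norm_num
    have h2 : (C (3 / 2) : ℚ⟦X⟧) = 3 * C (1 / 2) := by rw [← map_ofNat C, ← map_mul]; norm_num
    rw [inv_eq_one_div]
    linear_combination (exp ℚ - 2) * h1 - h2
  rw [mk_sum_stirling2_choose_cd_eq_subst, exp_mul_involutionEGF, hexponent,
    expComp_eq_exp_subst (constantCoeff_subst_eq_zero hh _ hq),
    subst_comp_subst_apply (HasSubst.of_constantCoeff_zero' hq)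
      (HasSubst.of_constantCoeff_zero' hh)]
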